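/- Let A be a triangle matrix (a_{nn} ≠ 0 for all n and a_{nk} = 0 for k > n) and X a Banach lattice. Then every x̄ ∈ h_Φ^A(X) is order continuous in the following sense: for every sequence (x̄^{(m)}) in h_Φ^A(X) with 0 ≤ x̄^{(m)} ≤ |x̄| coordinatewise for all m and with x_k^{(m)} → 0 in X for each k as m → ∞, one has ρ_Φ^A(t x̄^{(m)}) → 0 for every t > 0, and consequently ‖x̄^{(m)}‖_Φ^A → 0. -/

import Mathlib

open Filter Topology

/-- An Orlicz function: convex, nondecreasing, continuous on `[0,∞)`,
vanishing at `0`, positive on `(0,∞)`, tending to `∞` at `∞`. -/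
structure IsOrliczFn (φ : ℝ → ℝ) : Prop where
  convexOn : ConvexOn ℝ (Set.Ici (0 : ℝ)) φ
  monotoneOn : MonotoneOn φ (Set.Ici (0 : ℝ))
  continuousOn : ContinuousOn φ (Set.Ici (0 : ℝ))
  map_zero : φ 0 = 0
  pos : ∀ t : ℝ, 0 < t → 0 < φ t
  tendsto_atTop : Filter.Tendsto φ Filter.atTop Filter.atTop

/-- A Musielak-Orlicz function: a sequence of Orlicz functions. -/
def IsMusielakOrlicz (Φ : ℕ → ℝ → ℝ) : Prop := ∀ n, IsOrliczFn (Φ n)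

/-- Condition δ₂ for a Musielak-Orlicz function. -/
def MOCondDelta2 (Φ : ℕ → ℝ → ℝ) : Prop :=
  ∃ K > (0 : ℝ), ∃ δ > (0 : ℝ), ∃ c : ℕ → ℝ, (∀ n, 0 ≤ c n) ∧ Summable c ∧
    ∀ n : ℕ, ∀ x : ℝ, 0 ≤ x → Φ n x ≤ δ → Φ n (2 * x) ≤ K * Φ n x + c n

/-- Condition (*) for a Musielak-Orlicz function. -/
def MOCondStar (Φ : ℕ → ℝ → ℝ) : Prop :=
  ∀ ε : ℝ, ε ∈ Set.Ioo (0 : ℝ) 1 → ∃ δ > (0 : ℝ), ∀ n : ℕ, ∀ u : ℝ, 0 ≤ u →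
    Φ n u < 1 - ε → Φ n ((1 + δ) * u) ≤ 1

/-- The class 𝒜 of infinite matrices: every column is nonzero. -/
def MatrixClassA (a : ℕ → ℕ → ℝ) : Prop := ∀ k, ∃ n, a n k ≠ 0

/-- A triangle matrix: nonzero diagonal, zero above the diagonal. -/
def IsTriangle (a : ℕ → ℕ → ℝ) : Prop := (∀ n, a n n ≠ 0) ∧ ∀ n k, n < k → a n k = 0

/-- The `n`-th row sum `∑_k |a_{nk}| ‖x_k‖`. -/
noncomputable def rowSum {X : Type*} [NormedAddCommGroup X]
    (a : ℕ → ℕ → ℝ) (x : ℕ → X) (n : ℕ) : ℝ :=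
  ∑' k, |a n k| * ‖x k‖

/-- Membership in the generalized Musielak-Orlicz sequence space `l_Φ^A(X)`:
`x` is a bounded sequence whose row sums are finite and
`∑_n φ_n(rowSum_n / σ) < ∞` for some `σ > 0`. -/
def MemL {X : Type*} [NormedAddCommGroup X]
    (Φ : ℕ → ℝ → ℝ) (a : ℕ → ℕ → ℝ) (x : ℕ → X) : Prop :=
  (∃ C : ℝ, ∀ k, ‖x k‖ ≤ C) ∧ (∀ n, Summable fun k => |a n k| * ‖x k‖) ∧
    ∃ σ > (0 : ℝ), Summable fun n => Φ n (rowSum a x n / σ)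

/-- Membership in `h_Φ^A(X)`: as `MemL` but for every `σ > 0`. -/
def MemH {X : Type*} [NormedAddCommGroup X]
    (Φ : ℕ → ℝ → ℝ) (a : ℕ → ℕ → ℝ) (x : ℕ → X) : Prop :=
  (∃ C : ℝ, ∀ k, ‖x k‖ ≤ C) ∧ (∀ n, Summable fun k => |a n k| * ‖x k‖) ∧
    ∀ σ > (0 : ℝ), Summable fun n => Φ n (rowSum a x n / σ)

/-- The Luxemburg-type norm `‖x‖_Φ^A`. -/
noncomputable def ANorm {X : Type*} [NormedAddCommGroup X]
    (Φ : ℕ → ℝ → ℝ) (a : ℕ → ℕ → ℝ) (x : ℕ → X) : ℝ :=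
  sInf {σ : ℝ | 0 < σ ∧ (Summable fun n => Φ n (rowSum a x n / σ)) ∧
    (∑' n, Φ n (rowSum a x n / σ)) ≤ 1}

/-- The modular `ρ_Φ^A(x) = ∑_n φ_n(∑_k |a_{nk}| ‖x_k‖)`. -/
noncomputable def rhoA {X : Type*} [NormedAddCommGroup X]
    (Φ : ℕ → ℝ → ℝ) (a : ℕ → ℕ → ℝ) (x : ℕ → X) : ℝ :=
  ∑' n, Φ n (rowSum a x n)

/-- The `m`-th section of a sequence: first `m` coordinates kept, rest zero. -/
def sect {X : Type*} [Zero X] (x : ℕ → X) (m : ℕ) : ℕ → X :=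
  fun k => if k < m then x k else 0

/-! Since `0 ≤ F m ≤ |x|` and the norm is solid, `‖F m k‖ ≤ ‖x k‖`. Hence each row sum of
`t • F m` is dominated by the corresponding row sum of `t • x`, and Tannery's theorem (dominated
convergence for series) applied twice, first inside each row and then to the modular, gives
`ρ(t • F m) → 0`. Modular convergence for every `t > 0` yields norm convergence, because
`ρ(σ⁻¹ • F m) ≤ 1` forces `‖F m‖ ≤ σ`. -/

theorem tendsto_tsum_zero_of_le {α β : Type*} {l : Filter α} {f : α → β → ℝ} {g : β → ℝ}
    (hg : Summable g) (hf₀ : ∀ m n, 0 ≤ f m n) (hfg : ∀ m n, f m n ≤ g n)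
    (hf : ∀ n, Tendsto (f · n) l (𝓝 0)) :
    Tendsto (fun m => ∑' n, f m n) l (𝓝 0) := by
  simpa using tendsto_tsum_of_dominated_convergence hg hf
    (.of_forall fun m n => by simpa [abs_of_nonneg (hf₀ m n)] using hfg m n)

namespace IsOrliczFn

variable {φ : ℝ → ℝ}

theorem nonneg (hφ : IsOrliczFn φ) {t : ℝ} (ht : 0 ≤ t) : 0 ≤ φ t :=
  hφ.map_zero ▸ hφ.monotoneOn Set.self_mem_Ici ht ht

theorem tendsto_zero {α : Type*} {l : Filter α} {u : α → ℝ} (hφ : IsOrliczFn φ)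
    (hu₀ : ∀ i, 0 ≤ u i) (hu : Tendsto u l (𝓝 0)) : Tendsto (φ ∘ u) l (𝓝 0) := by
  have hcont : ContinuousWithinAt φ (Set.Ici 0) 0 := hφ.continuousOn 0 Set.self_mem_Ici
  simpa [hφ.map_zero] using
    hcont.tendsto.comp (tendsto_nhdsWithin_iff.2 ⟨hu, .of_forall hu₀⟩)

end IsOrliczFn

section RowSum

variable {X : Type*} [NormedAddCommGroup X] {a : ℕ → ℕ → ℝ}

theorem rowSum_nonneg (x : ℕ → X) (n : ℕ) : 0 ≤ rowSum a x n :=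
  tsum_nonneg fun _ => by positivity

theorem summable_row_of_norm_le {x y : ℕ → X} (hyx : ∀ k, ‖y k‖ ≤ ‖x k‖) {n : ℕ}
    (hx : Summable fun k => |a n k| * ‖x k‖) : Summable fun k => |a n k| * ‖y k‖ :=
  hx.of_nonneg_of_le (fun _ => by positivity)
    fun k => mul_le_mul_of_nonneg_left (hyx k) (abs_nonneg _)

theorem rowSum_le_rowSum {x y : ℕ → X} (hyx : ∀ k, ‖y k‖ ≤ ‖x k‖) {n : ℕ}
    (hx : Summable fun k => |a n k| * ‖x k‖) : rowSum a y n ≤ rowSum a x n :=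
  (summable_row_of_norm_le hyx hx).tsum_le_tsum
    (fun k => mul_le_mul_of_nonneg_left (hyx k) (abs_nonneg _)) hx

theorem rowSum_smul [NormedSpace ℝ X] (c : ℝ) (x : ℕ → X) (n : ℕ) :
    rowSum a (c • x) n = |c| * rowSum a x n := by
  simp only [rowSum, Pi.smul_apply, norm_smul, Real.norm_eq_abs, ← tsum_mul_left]
  exact tsum_congr fun k => by ring

theorem tendsto_rowSum_zero {F : ℕ → ℕ → X} {x : ℕ → X} (hFx : ∀ m k, ‖F m k‖ ≤ ‖x k‖)
    (hF : ∀ k, Tendsto (fun m => ‖F m k‖) atTop (𝓝 0)) {n : ℕ}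
    (hx : Summable fun k => |a n k| * ‖x k‖) :
    Tendsto (fun m => rowSum a (F m) n) atTop (𝓝 0) :=
  tendsto_tsum_zero_of_le hx (fun _ _ => by positivity)
    (fun m k => mul_le_mul_of_nonneg_left (hFx m k) (abs_nonneg _))
    fun k => by simpa using (hF k).const_mul |a n k|

end RowSum

section Modular

variable {X : Type*} [NormedAddCommGroup X] {Φ : ℕ → ℝ → ℝ} {a : ℕ → ℕ → ℝ}

theorem MemH.of_norm_le (hΦ : IsMusielakOrlicz Φ) {x y : ℕ → X} (hx : MemH Φ a x)
    (hyx : ∀ k, ‖y k‖ ≤ ‖x k‖) : MemH Φ a y := by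
  obtain ⟨⟨C, hC⟩, hrow, hσ⟩ := hx
  refine ⟨⟨C, fun k => (hyx k).trans (hC k)⟩, fun n => summable_row_of_norm_le hyx (hrow n),
    fun σ hσpos => ?_⟩
  refine (hσ σ hσpos).of_nonneg_of_le
    (fun n => (hΦ n).nonneg (div_nonneg (rowSum_nonneg y n) hσpos.le)) fun n => ?_
  exact (hΦ n).monotoneOn (div_nonneg (rowSum_nonneg y n) hσpos.le)
    (div_nonneg (rowSum_nonneg x n) hσpos.le)
    (div_le_div_of_nonneg_right (rowSum_le_rowSum hyx (hrow n)) hσpos.le)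

theorem MemH.smul [NormedSpace ℝ X] {x : ℕ → X} (hx : MemH Φ a x) {t : ℝ} (ht : t ≠ 0) :
    MemH Φ a (t • x) := by
  obtain ⟨⟨C, hC⟩, hrow, hσ⟩ := hx
  refine ⟨⟨|t| * C, fun k => ?_⟩, fun n => ?_, fun σ hσpos => ?_⟩
  · simpa [norm_smul] using mul_le_mul_of_nonneg_left (hC k) (abs_nonneg t)
  · simpa [norm_smul, mul_left_comm] using (hrow n).mul_left |t|
  · have hσt : 0 < σ / |t| := div_pos hσpos (abs_pos.2 ht)
    refine (hσ _ hσt).congr fun n => ?_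
    rw [rowSum_smul]
    field_simp

theorem MemH.summable_rhoA {x : ℕ → X} (hx : MemH Φ a x) :
    Summable fun n => Φ n (rowSum a x n) := by
  simpa using hx.2.2 1 one_pos

theorem tendsto_rhoA_zero (hΦ : IsMusielakOrlicz Φ) {F : ℕ → ℕ → X} {x : ℕ → X}
    (hx : MemH Φ a x) (hFx : ∀ m k, ‖F m k‖ ≤ ‖x k‖)
    (hF : ∀ k, Tendsto (fun m => ‖F m k‖) atTop (𝓝 0)) :
    Tendsto (fun m => rhoA Φ a (F m)) atTop (𝓝 0) :=
  tendsto_tsum_zero_of_le hx.summable_rhoA (fun _ n => (hΦ n).nonneg (rowSum_nonneg _ n))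
    (fun m n => (hΦ n).monotoneOn (rowSum_nonneg _ n) (rowSum_nonneg _ n)
      (rowSum_le_rowSum (hFx m) (hx.2.1 n)))
    fun n => (hΦ n).tendsto_zero (fun _ => rowSum_nonneg _ n)
      (tendsto_rowSum_zero hFx hF (hx.2.1 n))

end Modular

section LuxemburgNorm

variable {X : Type*} [NormedAddCommGroup X] {Φ : ℕ → ℝ → ℝ} {a : ℕ → ℕ → ℝ}

theorem ANorm_nonneg (x : ℕ → X) : 0 ≤ ANorm Φ a x :=
  Real.sInf_nonneg fun _ hσ => hσ.1.le

variable [NormedSpace ℝ X]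

theorem ANorm_le_of_rhoA_le {x : ℕ → X} {σ : ℝ} (hσ : 0 < σ)
    (hx : Summable fun n => Φ n (rowSum a x n / σ)) (hρ : rhoA Φ a (σ⁻¹ • x) ≤ 1) :
    ANorm Φ a x ≤ σ := by
  have hdiv : ∀ n, rowSum a (σ⁻¹ • x) n = rowSum a x n / σ := fun n => by
    rw [rowSum_smul, abs_of_pos (inv_pos.2 hσ), inv_mul_eq_div]
  refine csInf_le ⟨0, fun _ hτ => hτ.1.le⟩ ⟨hσ, hx, ?_⟩
  simpa only [rhoA, hdiv] using hρ

theorem tendsto_ANorm_zero {F : ℕ → ℕ → X} (hF : ∀ m, MemH Φ a (F m))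
    (hρ : ∀ t > (0 : ℝ), Tendsto (fun m => rhoA Φ a (t • F m)) atTop (𝓝 0)) :
    Tendsto (fun m => ANorm Φ a (F m)) atTop (𝓝 0) := by
  refine tendsto_order.2 ⟨fun ε hε => .of_forall fun m => hε.trans_le (ANorm_nonneg _),
    fun ε hε => ?_⟩
  have hε2 : 0 < ε / 2 := half_pos hε
  filter_upwards [(hρ _ (inv_pos.2 hε2)).eventually_lt_const one_pos] with m hm
  exact (ANorm_le_of_rhoA_le hε2 ((hF m).2.2 _ hε2) hm.le).trans_lt (half_lt_self hε)

end LuxemburgNorm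

theorem hPhiA_order_continuous_general
    {X : Type*} [NormedAddCommGroup X] [Lattice X] [IsOrderedAddMonoid X] [HasSolidNorm X]
    [NormedSpace ℝ X]
    (Φ : ℕ → ℝ → ℝ) (hΦ : IsMusielakOrlicz Φ)
    (a : ℕ → ℕ → ℝ)
    (x : ℕ → X) (hx : MemH Φ a x)
    (F : ℕ → ℕ → X)
    (hpos : ∀ m k, 0 ≤ F m k) (hle : ∀ m k, F m k ≤ |x k|)
    (hconv : ∀ k, Tendsto (fun m => F m k) atTop (𝓝 (0 : X))) :
    (∀ t > (0 : ℝ), Tendsto (fun m => rhoA Φ a (t • F m)) atTop (𝓝 0)) ∧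
    Tendsto (fun m => ANorm Φ a (F m)) atTop (𝓝 0) := by
  have hFx : ∀ m k, ‖F m k‖ ≤ ‖x k‖ := fun m k =>
    norm_le_norm_of_abs_le_abs (by rw [abs_of_nonneg (hpos m k)]; exact hle m k)
  have hρ : ∀ t > (0 : ℝ), Tendsto (fun m => rhoA Φ a (t • F m)) atTop (𝓝 0) := by
    intro t ht
    refine tendsto_rhoA_zero hΦ (hx.smul ht.ne') (fun m k => ?_) fun k => ?_
    · simpa only [Pi.smul_apply, norm_smul] using
        mul_le_mul_of_nonneg_left (hFx m k) (norm_nonneg t)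
    · simpa [norm_smul] using (hconv k).norm.const_mul ‖t‖
  exact ⟨hρ, tendsto_ANorm_zero (fun m => hx.of_norm_le hΦ (hFx m)) hρ⟩

/-- for a triangle matrix `A` and a Banach lattice `X`, every
element of `h_Φ^A(X)` is order continuous. -/
theorem hPhiA_order_continuous
    {X : Type*} [NormedAddCommGroup X] [Lattice X] [IsOrderedAddMonoid X] [HasSolidNorm X]
    [NormedSpace ℝ X] [CompleteSpace X]
    (Φ : ℕ → ℝ → ℝ) (hΦ : IsMusielakOrlicz Φ)
    (a : ℕ → ℕ → ℝ) (hA : IsTriangle a)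
    (x : ℕ → X) (hx : MemH Φ a x)
    (F : ℕ → ℕ → X) (hF : ∀ m, MemH Φ a (F m))
    (hpos : ∀ m k, 0 ≤ F m k) (hle : ∀ m k, F m k ≤ |x k|)
    (hconv : ∀ k, Tendsto (fun m => F m k) atTop (𝓝 (0 : X))) :
    (∀ t > (0 : ℝ), Tendsto (fun m => rhoA Φ a (t • F m)) atTop (𝓝 0)) ∧
    Tendsto (fun m => ANorm Φ a (F m)) atTop (𝓝 0) :=
  hPhiA_order_continuous_general Φ hΦ a x hx F hpos hle hconv
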